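/- arXiv:2504.14932 — 7 statements merged into one kernel-verified Lean document; each statement's English description precedes it below -/
import Mathlib

section
/- Let T_M > 0, T⁰ ∈ (T_M, 2T_M), ρ⁰ > 0, ū⁰ ∈ ℝ², β ≥ 0 and 0 < ζ < 1/(4T_M). Define k₁(v,u) = |v−u|·√(μ₀(v))·√(μ₀(u)) and k_{M,1}(v,u) = k₁(v,u)·√(μ₀(v)·μ_M(u))/√(μ₀(u)·μ_M(v)). Then there exists a constant C > 0 such that for all v ∈ ℝ²: ∫_{ℝ²} k_{M,1}(v,u)·e^{ζ(|u|²−|v|²)}·(1+|u|²)^{β/2}·(1+|v|²)^{−β/2} du ≤ C·(1+|v|)^{−1}. -/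
open MeasureTheory

/-- Local Maxwellian with density `ρ0`, temperature `T0` and bulk velocity `u0`. -/
noncomputable def mu0 (ρ0 T0 : ℝ) (u0 : ℝ × ℝ) (v : ℝ × ℝ) : ℝ :=
  (ρ0 / (2 * Real.pi * T0)) *
    Real.exp (-((v.1 - u0.1) ^ 2 + (v.2 - u0.2) ^ 2) / (2 * T0))

/-- Global Maxwellian with temperature `TM`. -/
noncomputable def muM (TM : ℝ) (v : ℝ × ℝ) : ℝ :=
  (1 / (2 * Real.pi * TM)) * Real.exp (-(v.1 ^ 2 + v.2 ^ 2) / (2 * TM))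

/-- Loss part of the 2D hard-sphere linearized collision kernel. -/
noncomputable def k1 (ρ0 T0 : ℝ) (u0 : ℝ × ℝ) (v u : ℝ × ℝ) : ℝ :=
  Real.sqrt ((v.1 - u.1) ^ 2 + (v.2 - u.2) ^ 2) *
    Real.sqrt (mu0 ρ0 T0 u0 v) * Real.sqrt (mu0 ρ0 T0 u0 u)

/-- Global-Maxwellian rescaling of the loss kernel `k₁`. -/
noncomputable def kM1 (ρ0 T0 TM : ℝ) (u0 : ℝ × ℝ) (v u : ℝ × ℝ) : ℝ :=
  k1 ρ0 T0 u0 v u *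
    Real.sqrt (mu0 ρ0 T0 u0 v * muM TM u) / Real.sqrt (mu0 ρ0 T0 u0 u * muM TM v)

/-!
With `a = 1/(4 T_M) - ζ > 0`, the normalising constants cancel and
`k_{M,1}(v,u) e^{ζ(|u|²-|v|²)} = |v-u| μ₀(v) e^{a|v|²} e^{-a|u|²}`.
Because `T⁰ < 2 T_M` we have `a < 1/(2T⁰)`, so `μ₀(v) e^{a|v|²}` is still a Gaussian in `v`
and absorbs `(1+|v|)²`, while the polynomial weights in `u` are absorbed by half of `e^{-a|u|²}`.
With `|v-u| ≤ √2 (1+|v|)(1+|u|)` this gives the pointwise bound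
`C (1+|v|)⁻¹ e^{-a|u|²/2}`, a Gaussian in `u`.
-/

open Real

lemma one_add_le_mul_exp {δ : ℝ} (hδ : 0 < δ) {z : ℝ} (hz : 0 ≤ z) :
    1 + z ≤ max 1 δ⁻¹ * exp (δ * z) := by
  have hM : 1 ≤ max 1 δ⁻¹ * δ := by
    calc (1 : ℝ) = δ⁻¹ * δ := (inv_mul_cancel₀ hδ.ne').symm
      _ ≤ max 1 δ⁻¹ * δ := by gcongr; exact le_max_right _ _
  calc 1 + z ≤ max 1 δ⁻¹ * (1 + δ * z) := by nlinarith [le_max_left 1 δ⁻¹]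
    _ ≤ max 1 δ⁻¹ * exp (δ * z) := by gcongr; linarith [add_one_le_exp (δ * z)]

lemma exists_one_add_rpow_le_mul_exp {γ ε : ℝ} (hγ : 0 ≤ γ) (hε : 0 < ε) :
    ∃ C > 0, ∀ z ≥ 0, (1 + z) ^ γ ≤ C * exp (ε * z) := by
  set δ := ε / (γ + 1)
  have hδ : 0 < δ := by positivity
  have hδγ : δ * γ ≤ ε := by
    rw [div_mul_eq_mul_div, div_le_iff₀ (by positivity)]; nlinarith
  refine ⟨max 1 δ⁻¹ ^ γ, by positivity, fun z hz => ?_⟩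
  calc (1 + z) ^ γ ≤ (max 1 δ⁻¹ * exp (δ * z)) ^ γ := by
        gcongr; exact one_add_le_mul_exp hδ hz
    _ = max 1 δ⁻¹ ^ γ * exp (δ * γ * z) := by
        rw [mul_rpow (by positivity) (exp_pos _).le, ← exp_mul]; ring_nf
    _ ≤ max 1 δ⁻¹ ^ γ * exp (ε * z) := by gcongr

/-- Completing the square: a shifted Gaussian `e^{-c(w-m)²}` beats `e^{p w²}` with half the
margin `c - p` to spare. -/
lemma mul_sq_sub_mul_sub_sq_le {p c : ℝ} (hpc : p < c) (hc : 0 ≤ c) (w m : ℝ) :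
    p * w ^ 2 - c * (w - m) ^ 2 ≤ -((c - p) / 2) * w ^ 2 + 2 * c ^ 2 * m ^ 2 / (c - p) := by
  have hb : 0 < c - p := sub_pos.mpr hpc
  rw [← mul_le_mul_iff_right₀ hb, mul_add, mul_div_cancel₀ _ hb.ne']
  nlinarith [sq_nonneg ((c - p) * w - 2 * c * m), mul_nonneg (mul_nonneg hb.le hc) (sq_nonneg m)]

lemma one_add_sqrt_sq_le {s : ℝ} (hs : 0 ≤ s) : (1 + √s) ^ 2 ≤ 2 * (1 + s) := by
  nlinarith [sq_nonneg (1 - √s), sq_sqrt hs]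

lemma integrable_and_integral_exp_neg_mul_sq_add_sq {c : ℝ} (hc : 0 < c) :
    Integrable (fun u : ℝ × ℝ => exp (-(c * (u.1 ^ 2 + u.2 ^ 2)))) ∧
      ∫ u : ℝ × ℝ, exp (-(c * (u.1 ^ 2 + u.2 ^ 2))) = π / c := by
  have hsplit : (fun u : ℝ × ℝ => exp (-(c * (u.1 ^ 2 + u.2 ^ 2)))) =
      fun u => exp (-c * u.1 ^ 2) * exp (-c * u.2 ^ 2) := by
    ext u; rw [← exp_add]; ring_nf
  rw [hsplit, Measure.volume_eq_prod]
  refine ⟨(integrable_exp_neg_mul_sq hc).mul_prod (integrable_exp_neg_mul_sq hc), ?_⟩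
  rw [integral_prod_mul (fun x : ℝ => exp (-c * x ^ 2)) (fun x : ℝ => exp (-c * x ^ 2)),
    integral_gaussian, ← sq, sq_sqrt (by positivity)]

lemma mu0_pos {ρ0 T0 : ℝ} (hρ0 : 0 < ρ0) (hT0 : 0 < T0) (u0 v : ℝ × ℝ) :
    0 < mu0 ρ0 T0 u0 v := by
  unfold mu0; positivity

lemma muM_div_muM {TM : ℝ} (hTM : 0 < TM) (u v : ℝ × ℝ) :
    muM TM u / muM TM v = exp (((v.1 ^ 2 + v.2 ^ 2) - (u.1 ^ 2 + u.2 ^ 2)) / (2 * TM)) := by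
  unfold muM
  rw [mul_div_mul_left _ _ (by positivity), ← exp_sub]
  ring_nf

lemma kM1_eq {ρ0 T0 TM : ℝ} (hρ0 : 0 < ρ0) (hT0 : 0 < T0) (hTM : 0 < TM)
    (u0 v u : ℝ × ℝ) :
    kM1 ρ0 T0 TM u0 v u =
      √((v.1 - u.1) ^ 2 + (v.2 - u.2) ^ 2) * mu0 ρ0 T0 u0 v *
        exp (((v.1 ^ 2 + v.2 ^ 2) - (u.1 ^ 2 + u.2 ^ 2)) / (4 * TM)) := by
  have hv := mu0_pos hρ0 hT0 u0 v
  have hu := mu0_pos hρ0 hT0 u0 u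
  have hMv : 0 < muM TM v := by unfold muM; positivity
  have hsqrt_exp : exp (((v.1 ^ 2 + v.2 ^ 2) - (u.1 ^ 2 + u.2 ^ 2)) / (4 * TM)) =
      √(muM TM u) / √(muM TM v) := by
    rw [← sqrt_div' _ hMv.le, muM_div_muM hTM, ← exp_half]; ring_nf
  unfold kM1 k1
  rw [hsqrt_exp, sqrt_mul hv.le, sqrt_mul hu.le]
  field_simp
  rw [sq_sqrt hv.le]
  ring

lemma exists_one_add_sqrt_sq_mul_mu0_mul_exp_le {ρ0 T0 a : ℝ} (hρ0 : 0 < ρ0) (hT0 : 0 < T0)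
    (ha : a < 1 / (2 * T0)) (u0 : ℝ × ℝ) :
    ∃ C > 0, ∀ v : ℝ × ℝ, (1 + √(v.1 ^ 2 + v.2 ^ 2)) ^ 2 *
      (mu0 ρ0 T0 u0 v * exp (a * (v.1 ^ 2 + v.2 ^ 2))) ≤ C := by
  set q := 1 / (2 * T0)
  set b := q - a
  have hb : 0 < b := sub_pos.mpr ha
  set K := 2 * q ^ 2 * u0.1 ^ 2 / b + 2 * q ^ 2 * u0.2 ^ 2 / b
  set M := max 1 (b / 2)⁻¹
  refine ⟨2 * M * (ρ0 / (2 * π * T0) * exp K), by positivity, fun v => ?_⟩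
  set r := v.1 ^ 2 + v.2 ^ 2
  have hr : 0 ≤ r := by positivity
  have hmu : mu0 ρ0 T0 u0 v * exp (a * r) =
      ρ0 / (2 * π * T0) * exp ((a * v.1 ^ 2 - q * (v.1 - u0.1) ^ 2) +
        (a * v.2 ^ 2 - q * (v.2 - u0.2) ^ 2)) := by
    unfold mu0
    rw [mul_assoc, ← exp_add]
    congr 2
    simp only [q, r]
    field_simp
    ring
  have hexponent : (a * v.1 ^ 2 - q * (v.1 - u0.1) ^ 2) + (a * v.2 ^ 2 - q * (v.2 - u0.2) ^ 2)
      ≤ -(b / 2) * r + K := by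
    have := mul_sq_sub_mul_sub_sq_le ha (by positivity) v.1 u0.1
    have := mul_sq_sub_mul_sub_sq_le ha (by positivity) v.2 u0.2
    linarith
  have hpoly : (1 + √r) ^ 2 ≤ 2 * M * exp (b / 2 * r) := by
    have := one_add_le_mul_exp (half_pos hb) hr
    linarith [one_add_sqrt_sq_le hr]
  calc (1 + √r) ^ 2 * (mu0 ρ0 T0 u0 v * exp (a * r))
      ≤ (2 * M * exp (b / 2 * r)) * (ρ0 / (2 * π * T0) * exp (-(b / 2) * r + K)) := by
        rw [hmu]; gcongr
    _ = 2 * M * (ρ0 / (2 * π * T0) * exp K) := by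
        rw [show -(b / 2) * r + K = K + -(b / 2 * r) by ring, exp_add, exp_neg]
        field_simp

lemma exists_one_add_sqrt_mul_rpow_mul_exp_le {a β : ℝ} (ha : 0 < a) (hβ : 0 ≤ β) :
    ∃ C > 0, ∀ s ≥ 0,
      (1 + √s) * (1 + s) ^ (β / 2) * exp (-(a * s)) ≤ C * exp (-(a / 2 * s)) := by
  obtain ⟨C, hC, hbound⟩ := exists_one_add_rpow_le_mul_exp (γ := (β + 1) / 2) (by positivity)
    (half_pos ha)
  refine ⟨√2 * C, by positivity, fun s hs => ?_⟩
  have hsqrt : 1 + √s ≤ √2 * (1 + s) ^ (1 / 2 : ℝ) := by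
    rw [← sqrt_eq_rpow, ← sqrt_mul zero_le_two]
    exact le_sqrt_of_sq_le (one_add_sqrt_sq_le hs)
  calc (1 + √s) * (1 + s) ^ (β / 2) * exp (-(a * s))
      ≤ √2 * (1 + s) ^ (1 / 2 : ℝ) * (1 + s) ^ (β / 2) * exp (-(a * s)) := by gcongr
    _ = √2 * (1 + s) ^ ((β + 1) / 2) * exp (-(a * s)) := by
        rw [mul_assoc (√2), ← rpow_add (by positivity)]; ring_nf
    _ ≤ √2 * (C * exp (a / 2 * s)) * exp (-(a * s)) := by gcongr; exact hbound s hs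
    _ = √2 * C * (exp (a / 2 * s) * exp (-(a * s))) := by ring
    _ = √2 * C * exp (-(a / 2 * s)) := by rw [← exp_add]; ring_nf

lemma sqrt_dist_sq_le (v u : ℝ × ℝ) :
    √((v.1 - u.1) ^ 2 + (v.2 - u.2) ^ 2) ≤
      √2 * ((1 + √(v.1 ^ 2 + v.2 ^ 2)) * (1 + √(u.1 ^ 2 + u.2 ^ 2))) := by
  set x := √(v.1 ^ 2 + v.2 ^ 2)
  set y := √(u.1 ^ 2 + u.2 ^ 2)
  have hx : x ^ 2 = v.1 ^ 2 + v.2 ^ 2 := sq_sqrt (by positivity)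
  have hy : y ^ 2 = u.1 ^ 2 + u.2 ^ 2 := sq_sqrt (by positivity)
  have hx0 : 0 ≤ x := sqrt_nonneg _
  have hy0 : 0 ≤ y := sqrt_nonneg _
  have hdist : (v.1 - u.1) ^ 2 + (v.2 - u.2) ^ 2 ≤ 2 * (x ^ 2 + y ^ 2) := by
    rw [hx, hy]; nlinarith [sq_nonneg (v.1 + u.1), sq_nonneg (v.2 + u.2)]
  have hxy : x ^ 2 + y ^ 2 ≤ ((1 + x) * (1 + y)) ^ 2 := by
    nlinarith [mul_nonneg hx0 hy0]
  rw [← sqrt_sq (by positivity : 0 ≤ (1 + x) * (1 + y)), ← sqrt_mul zero_le_two]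
  gcongr
  linarith

lemma exists_weighted_kM1_le {TM T0 ρ0 : ℝ} (u0 : ℝ × ℝ) {β ζ : ℝ}
    (hTM : 0 < TM) (hT0 : TM < T0) (hT0' : T0 < 2 * TM) (hρ0 : 0 < ρ0)
    (hβ : 0 ≤ β) (hζ0 : 0 < ζ) (hζ : ζ < 1 / (4 * TM)) :
    ∃ C > 0, ∀ v u : ℝ × ℝ,
      kM1 ρ0 T0 TM u0 v u * exp (ζ * ((u.1 ^ 2 + u.2 ^ 2) - (v.1 ^ 2 + v.2 ^ 2))) *
          (1 + (u.1 ^ 2 + u.2 ^ 2)) ^ (β / 2) * (1 + (v.1 ^ 2 + v.2 ^ 2)) ^ (-(β / 2)) ≤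
        C * (1 + √(v.1 ^ 2 + v.2 ^ 2))⁻¹ *
          exp (-((1 / (4 * TM) - ζ) / 2 * (u.1 ^ 2 + u.2 ^ 2))) := by
  have hT0pos : 0 < T0 := hTM.trans hT0
  set a := 1 / (4 * TM) - ζ
  have ha : 0 < a := sub_pos.mpr hζ
  have haT0 : a < 1 / (2 * T0) := by
    have : 1 / (4 * TM) < 1 / (2 * T0) := one_div_lt_one_div_of_lt (by positivity) (by linarith)
    linarith
  obtain ⟨CV, hCV, hV⟩ := exists_one_add_sqrt_sq_mul_mu0_mul_exp_le hρ0 hT0pos haT0 u0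
  obtain ⟨CU, hCU, hU⟩ := exists_one_add_sqrt_mul_rpow_mul_exp_le ha hβ
  refine ⟨√2 * CV * CU, by positivity, fun v u => ?_⟩
  set r := v.1 ^ 2 + v.2 ^ 2
  set s := u.1 ^ 2 + u.2 ^ 2
  have hr : 0 ≤ r := by positivity
  have hs : 0 ≤ s := by positivity
  set P := mu0 ρ0 T0 u0 v * exp (a * r)
  set Q := (1 + s) ^ (β / 2) * exp (-(a * s))
  have hP : 0 ≤ P := by have := mu0_pos hρ0 hT0pos u0 v; positivity
  have hkernel : kM1 ρ0 T0 TM u0 v u * exp (ζ * (s - r)) * (1 + s) ^ (β / 2) =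
      √((v.1 - u.1) ^ 2 + (v.2 - u.2) ^ 2) * P * Q := by
    have hexp : exp ((r - s) / (4 * TM)) * exp (ζ * (s - r)) = exp (a * r) * exp (-(a * s)) := by
      rw [← exp_add, ← exp_add]; congr 1; simp only [a]; field_simp; ring
    rw [kM1_eq hρ0 hT0pos hTM]
    change _ * _ * exp ((r - s) / (4 * TM)) * _ * _ = _
    simp only [P, Q]
    linear_combination
      √((v.1 - u.1) ^ 2 + (v.2 - u.2) ^ 2) * mu0 ρ0 T0 u0 v * (1 + s) ^ (β / 2) * hexp
  have hweight : (1 + r) ^ (-(β / 2)) ≤ 1 :=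
    rpow_le_one_of_one_le_of_nonpos (by linarith) (by linarith)
  have hPV : (1 + √r) * P ≤ CV * (1 + √r)⁻¹ := by
    rw [← div_eq_mul_inv, le_div_iff₀ (by positivity)]
    linarith [hV v]
  rw [hkernel]
  calc √((v.1 - u.1) ^ 2 + (v.2 - u.2) ^ 2) * P * Q * (1 + r) ^ (-(β / 2))
      ≤ √((v.1 - u.1) ^ 2 + (v.2 - u.2) ^ 2) * P * Q := by
        apply mul_le_of_le_one_right (by positivity) hweight
    _ ≤ √2 * ((1 + √r) * (1 + √s)) * P * Q := by gcongr; exact sqrt_dist_sq_le v u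
    _ = √2 * ((1 + √r) * P) * ((1 + √s) * (1 + s) ^ (β / 2) * exp (-(a * s))) := by ring
    _ ≤ √2 * (CV * (1 + √r)⁻¹) * (CU * exp (-(a / 2 * s))) := by
        gcongr √2 * ?_ * ?_
        exact hU s hs
    _ = √2 * CV * CU * (1 + √r)⁻¹ * exp (-(a / 2 * s)) := by ring

/-- First half of the proof of Lemma 4.1: weighted integral bound for the rescaled loss
kernel `k_{M,1}`. -/
theorem rescaled_loss_kernel_estimate
    (TM T0 ρ0 : ℝ) (u0 : ℝ × ℝ) (β ζ : ℝ)
    (hTM : 0 < TM) (hT0 : TM < T0) (hT0' : T0 < 2 * TM) (hρ0 : 0 < ρ0)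
    (hβ : 0 ≤ β) (hζ0 : 0 < ζ) (hζ : ζ < 1 / (4 * TM)) :
    ∃ C > 0, ∀ v : ℝ × ℝ,
      (∫ u : ℝ × ℝ,
          kM1 ρ0 T0 TM u0 v u *
            Real.exp (ζ * ((u.1 ^ 2 + u.2 ^ 2) - (v.1 ^ 2 + v.2 ^ 2))) *
            (1 + (u.1 ^ 2 + u.2 ^ 2)) ^ (β / 2) *
            (1 + (v.1 ^ 2 + v.2 ^ 2)) ^ (-(β / 2))) ≤
        C * (1 + Real.sqrt (v.1 ^ 2 + v.2 ^ 2))⁻¹ := by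
  obtain ⟨C, hC, hpointwise⟩ := exists_weighted_kM1_le u0 hTM hT0 hT0' hρ0 hβ hζ0 hζ
  set c := (1 / (4 * TM) - ζ) / 2
  have hc : 0 < c := half_pos (sub_pos.mpr hζ)
  obtain ⟨hint, hgauss⟩ := integrable_and_integral_exp_neg_mul_sq_add_sq hc
  refine ⟨C * (π / c), by positivity, fun v => ?_⟩
  calc _ ≤ ∫ u : ℝ × ℝ,
        C * (1 + √(v.1 ^ 2 + v.2 ^ 2))⁻¹ * exp (-(c * (u.1 ^ 2 + u.2 ^ 2))) := by
        refine integral_mono_of_nonneg (.of_forall fun u => ?_) (hint.const_mul _)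
          (.of_forall (hpointwise v))
        have : 0 ≤ kM1 ρ0 T0 TM u0 v u := by unfold kM1 k1; positivity
        positivity
    _ = C * (π / c) * (1 + √(v.1 ^ 2 + v.2 ^ 2))⁻¹ := by
        rw [integral_const_mul, hgauss]; ring
end

section
/- For every constant c₁ > 0 there exists a constant C > 0 such that for all v, w ∈ ℝ²: ∫_{ℝ²} exp( −(c₁/2)|v−u|² − c₁·(|v−w|² − |u−w|²)²/|v−u|² ) du ≤ C/(1+|v−w|), where the integral is taken over u ≠ v. -/
/-!
Put `x = u - v` and `q = v - w`. Then `|v - w|² - |u - w|² = -(2⟪q, x⟫ + |x|²)`, and an AM–GM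
estimate bounds the integrand off `x = 0` by `exp (-(c₁ / 4) (|x|² + |⟪q, x⟫|))`, a Gaussian damped
away from the line `q⊥`. Its integral is at most `4π / c₁`; integrating first along the `i`-th axis,
where the one-dimensional integral of `exp (-b |qᵢ t + s|)` is `2 / (b |qᵢ|)`, shows that `|qᵢ|`
times it is bounded too. Since `|q| ≤ |q₁| + |q₂|`, the product `(1 + |q|) ∫` is bounded uniformly.
-/

open MeasureTheory Real

theorem integral_exp_neg_mul_abs {b : ℝ} (hb : 0 < b) :
    ∫ x : ℝ, exp (-(b * |x|)) = 2 / b := by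
  rw [integral_comp_abs (f := fun x => exp (-(b * x)))]
  have := integral_exp_mul_Ioi (a := -b) (by linarith) 0
  simp only [neg_mul, mul_zero, exp_zero] at this ⊢
  rw [this]; field_simp

theorem integral_exp_neg_mul_abs_mul_add {b q : ℝ} (hb : 0 < b) (hq : q ≠ 0) (c : ℝ) :
    ∫ x : ℝ, exp (-(b * |q * x + c|)) = 2 / (b * |q|) := by
  rw [Measure.integral_comp_mul_left (fun y => exp (-(b * |y + c|))) q,
    integral_add_right_eq_self (fun y => exp (-(b * |y|))), integral_exp_neg_mul_abs hb,
    smul_eq_mul, abs_inv]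
  field_simp

theorem integrable_exp_neg_mul_abs_mul_add {b q : ℝ} (hb : 0 < b) (hq : q ≠ 0) (c : ℝ) :
    Integrable fun x : ℝ => exp (-(b * |q * x + c|)) :=
  Integrable.of_integral_ne_zero <| by
    rw [integral_exp_neg_mul_abs_mul_add hb hq]; positivity

noncomputable def gaussianStrip (a b : ℝ) (q x : ℝ × ℝ) : ℝ :=
  exp (-(a * (x.1 ^ 2 + x.2 ^ 2) + b * |q.1 * x.1 + q.2 * x.2|))

section gaussianStrip

variable {a b : ℝ}

theorem gaussianStrip_pos (q x : ℝ × ℝ) : 0 < gaussianStrip a b q x := exp_pos _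

theorem gaussianStrip_swap (q x : ℝ × ℝ) :
    gaussianStrip a b q.swap x.swap = gaussianStrip a b q x := by
  simp only [gaussianStrip, Prod.fst_swap, Prod.snd_swap, add_comm]

theorem gaussianStrip_le_mul (hb : 0 ≤ b) (q x : ℝ × ℝ) :
    gaussianStrip a b q x ≤ exp (-a * x.1 ^ 2) * exp (-a * x.2 ^ 2) := by
  rw [gaussianStrip, ← exp_add, exp_le_exp]
  nlinarith [abs_nonneg (q.1 * x.1 + q.2 * x.2)]

theorem integrable_gaussian_mul_gaussian (ha : 0 < a) :
    Integrable fun x : ℝ × ℝ => exp (-a * x.1 ^ 2) * exp (-a * x.2 ^ 2) :=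
  (integrable_exp_neg_mul_sq ha).mul_prod (integrable_exp_neg_mul_sq ha)

theorem integrable_gaussianStrip (ha : 0 < a) (hb : 0 ≤ b) (q : ℝ × ℝ) :
    Integrable (gaussianStrip a b q) :=
  (integrable_gaussian_mul_gaussian ha).mono'
    (by unfold gaussianStrip; fun_prop)
    (ae_of_all _ fun x => by
      rw [norm_of_nonneg (gaussianStrip_pos q x).le]; exact gaussianStrip_le_mul hb q x)

theorem integral_gaussianStrip_le (ha : 0 < a) (hb : 0 ≤ b) (q : ℝ × ℝ) :
    ∫ x, gaussianStrip a b q x ≤ π / a := by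
  calc ∫ x, gaussianStrip a b q x
      ≤ ∫ x : ℝ × ℝ, exp (-a * x.1 ^ 2) * exp (-a * x.2 ^ 2) :=
        integral_mono_of_nonneg (ae_of_all _ fun _ => (gaussianStrip_pos q _).le)
          (integrable_gaussian_mul_gaussian ha) (ae_of_all _ (gaussianStrip_le_mul hb q))
    _ = π / a := by
        refine (integral_prod_mul (fun t : ℝ => exp (-a * t ^ 2)) (fun t => exp (-a * t ^ 2))).trans ?_
        rw [integral_gaussian, mul_self_sqrt (by positivity)]

theorem integral_gaussianStrip_swap (q : ℝ × ℝ) :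
    ∫ x, gaussianStrip a b q.swap x = ∫ x, gaussianStrip a b q x := by
  simp_rw [← gaussianStrip_swap q.swap, Prod.swap_swap]
  exact integral_prod_swap (gaussianStrip a b q)

theorem abs_snd_mul_integral_gaussianStrip_le (ha : 0 < a) (hb : 0 < b) (q : ℝ × ℝ) :
    |q.2| * ∫ x, gaussianStrip a b q x ≤ 2 / b * sqrt (π / a) := by
  rcases eq_or_ne q.2 0 with hq | hq
  · rw [hq, abs_zero, zero_mul]; positivity
  have inner (s : ℝ) : |q.2| * ∫ t, gaussianStrip a b q (s, t) ≤ 2 / b * exp (-a * s ^ 2) := by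
    have split (t : ℝ) : gaussianStrip a b q (s, t) ≤
        exp (-a * s ^ 2) * exp (-(b * |q.2 * t + q.1 * s|)) := by
      rw [gaussianStrip, ← exp_add, exp_le_exp, add_comm (q.1 * s)]
      nlinarith [sq_nonneg t]
    calc |q.2| * ∫ t, gaussianStrip a b q (s, t)
        ≤ |q.2| * ∫ t, exp (-a * s ^ 2) * exp (-(b * |q.2 * t + q.1 * s|)) := by
          refine mul_le_mul_of_nonneg_left ?_ (abs_nonneg _)
          exact integral_mono_of_nonneg (ae_of_all _ fun _ => (gaussianStrip_pos q _).le)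
            ((integrable_exp_neg_mul_abs_mul_add hb hq _).const_mul _) (ae_of_all _ split)
      _ = 2 / b * exp (-a * s ^ 2) := by
          rw [integral_const_mul, integral_exp_neg_mul_abs_mul_add hb hq]
          field_simp
  calc |q.2| * ∫ x, gaussianStrip a b q x
      = ∫ s, |q.2| * ∫ t, gaussianStrip a b q (s, t) := by
        rw [integral_const_mul]
        exact congrArg _ (integral_prod _ (integrable_gaussianStrip ha hb.le q))
    _ ≤ ∫ s, 2 / b * exp (-a * s ^ 2) :=
        integral_mono_of_nonneg
          (ae_of_all _ fun _ => mul_nonneg (abs_nonneg _)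
            (integral_nonneg fun _ => (gaussianStrip_pos q _).le))
          ((integrable_exp_neg_mul_sq ha).const_mul _) (ae_of_all _ inner)
    _ = 2 / b * sqrt (π / a) := by rw [integral_const_mul, integral_gaussian]

theorem abs_fst_mul_integral_gaussianStrip_le (ha : 0 < a) (hb : 0 < b) (q : ℝ × ℝ) :
    |q.1| * ∫ x, gaussianStrip a b q x ≤ 2 / b * sqrt (π / a) := by
  simpa only [Prod.snd_swap, integral_gaussianStrip_swap] using
    abs_snd_mul_integral_gaussianStrip_le ha hb q.swap

theorem one_add_sqrt_mul_integral_gaussianStrip_le (ha : 0 < a) (hb : 0 < b) (q : ℝ × ℝ) :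
    (1 + sqrt (q.1 ^ 2 + q.2 ^ 2)) * ∫ x, gaussianStrip a b q x ≤
      π / a + 4 / b * sqrt (π / a) := by
  have hnorm : sqrt (q.1 ^ 2 + q.2 ^ 2) ≤ |q.1| + |q.2| :=
    sqrt_le_iff.mpr ⟨by positivity, by
      nlinarith [sq_abs q.1, sq_abs q.2, mul_nonneg (abs_nonneg q.1) (abs_nonneg q.2)]⟩
  have hI : 0 ≤ ∫ x, gaussianStrip a b q x := integral_nonneg fun x => (gaussianStrip_pos q x).le
  calc (1 + sqrt (q.1 ^ 2 + q.2 ^ 2)) * ∫ x, gaussianStrip a b q x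
      ≤ (1 + (|q.1| + |q.2|)) * ∫ x, gaussianStrip a b q x := by gcongr
    _ = (∫ x, gaussianStrip a b q x) + |q.1| * (∫ x, gaussianStrip a b q x) +
        |q.2| * ∫ x, gaussianStrip a b q x := by ring
    _ ≤ π / a + 2 / b * sqrt (π / a) + 2 / b * sqrt (π / a) := by
        exact add_le_add (add_le_add (integral_gaussianStrip_le ha hb.le q)
          (abs_fst_mul_integral_gaussianStrip_le ha hb q)) (abs_snd_mul_integral_gaussianStrip_le ha hb q)
    _ = π / a + 4 / b * sqrt (π / a) := by ring

end gaussianStrip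

theorem neg_half_mul_sub_mul_sq_div_le {c P : ℝ} (hc : 0 < c) (hP : 0 < P) (S : ℝ) :
    -(c / 2) * P - c * (2 * S + P) ^ 2 / P ≤ -(c / 4 * P + c / 4 * |S|) := by
  -- `2|S| ≤ |2S + P| + P`, then AM–GM
  have key : P * |S| ≤ 4 * (2 * S + P) ^ 2 + P ^ 2 := by
    rcases abs_cases S with ⟨h, _⟩ | ⟨h, _⟩ <;> rw [h] <;> nlinarith [sq_nonneg (4 * S + 2 * P)]
  have : c / 4 * |S| - c / 4 * P ≤ c * (2 * S + P) ^ 2 / P := by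
    rw [le_div_iff₀ hP]; nlinarith
  linarith

theorem gain_kernel_le_gaussianStrip {c : ℝ} (hc : 0 < c) {u v : ℝ × ℝ} (huv : u ≠ v)
    (w : ℝ × ℝ) :
    exp (-(c / 2) * ((v.1 - u.1) ^ 2 + (v.2 - u.2) ^ 2) -
        c * (((v.1 - w.1) ^ 2 + (v.2 - w.2) ^ 2) - ((u.1 - w.1) ^ 2 + (u.2 - w.2) ^ 2)) ^ 2 /
          ((v.1 - u.1) ^ 2 + (v.2 - u.2) ^ 2)) ≤
      gaussianStrip (c / 4) (c / 4) (v - w) (u - v) := by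
  have hP : 0 < (u.1 - v.1) ^ 2 + (u.2 - v.2) ^ 2 := by
    rcases not_and_or.mp (mt Prod.ext_iff.mpr huv) with h | h
    · exact add_pos_of_pos_of_nonneg (sq_pos_of_ne_zero (sub_ne_zero.mpr h)) (sq_nonneg _)
    · exact add_pos_of_nonneg_of_pos (sq_nonneg _) (sq_pos_of_ne_zero (sub_ne_zero.mpr h))
  rw [gaussianStrip, exp_le_exp]
  simp only [Prod.fst_sub, Prod.snd_sub]
  convert neg_half_mul_sub_mul_sq_div_le hc hP
    ((v.1 - w.1) * (u.1 - v.1) + (v.2 - w.2) * (u.2 - v.2)) using 2 <;> ring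

/-- Core Gaussian integral estimate from Appendix 6.3 (proof of Lemma 4.1). -/
theorem gaussian_gain_kernel_integral_estimate
    (c₁ : ℝ) (hc₁ : 0 < c₁) :
    ∃ C > 0, ∀ v w : ℝ × ℝ,
      (∫ u in {u : ℝ × ℝ | u ≠ v},
          Real.exp (-(c₁ / 2) * ((v.1 - u.1) ^ 2 + (v.2 - u.2) ^ 2) -
            c₁ * (((v.1 - w.1) ^ 2 + (v.2 - w.2) ^ 2) -
                ((u.1 - w.1) ^ 2 + (u.2 - w.2) ^ 2)) ^ 2 /
              ((v.1 - u.1) ^ 2 + (v.2 - u.2) ^ 2))) ≤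
        C / (1 + Real.sqrt ((v.1 - w.1) ^ 2 + (v.2 - w.2) ^ 2)) := by
  have ha : 0 < c₁ / 4 := by positivity
  refine ⟨π / (c₁ / 4) + 4 / (c₁ / 4) * sqrt (π / (c₁ / 4)), by positivity, fun v w => ?_⟩
  rw [le_div_iff₀' (by positivity), ← Set.compl_singleton_eq, restrict_compl_singleton]
  calc _ ≤ (1 + sqrt ((v - w).1 ^ 2 + (v - w).2 ^ 2)) *
        ∫ u, gaussianStrip (c₁ / 4) (c₁ / 4) (v - w) (u - v) := by
        refine mul_le_mul_of_nonneg_left ?_ (by positivity)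
        exact integral_mono_of_nonneg (ae_of_all _ fun _ => (exp_pos _).le)
          ((integrable_gaussianStrip ha ha.le _).comp_sub_right v)
          ((Measure.ae_ne volume v).mono fun u huv => gain_kernel_le_gaussianStrip hc₁ huv w)
    _ ≤ _ := by
        rw [integral_sub_right_eq_self (gaussianStrip _ _ (v - w))]
        exact one_add_sqrt_mul_integral_gaussianStrip_le ha ha _
end

section
/- Let ε > 0 and let I ⊆ ℝ be an interval. Suppose X, V₁, V₂ : I → ℝ are differentiable, 0 ≤ X(s) < ε⁻² for all s ∈ I, and X′ = V₁, V₁′ = G(X)·V₂², V₂′ = −G(X)·V₁·V₂ on I, where G(η) = −ε²/(1−ε²η). Then the functions s ↦ V₁(s)² + V₂(s)² and s ↦ V₂(s)·(1−ε²X(s)) are constant on I; equivalently, V₂(s)·e^{−W(X(s))} is constant, where W(η) = −ln(1−ε²η). -/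
/-! Along the characteristics, the force `G(X)·V₂·(V₂, −V₁)` is orthogonal to the velocity
`(V₁, V₂)`, so `V₁² + V₂²` has zero derivative. Since `(1 − ε²X)' = −ε²V₁ = G(X)(1 − ε²X)V₁`,
the product `V₂(1 − ε²X)` has derivative `−G V₁ V₂ (1 − ε²X) + G V₁ V₂ (1 − ε²X) = 0`; and
`e^{−W(X)} = 1 − ε²X` because `1 − ε²X > 0`. Zero derivative on a convex set means constant. -/

theorem Convex.is_const_of_hasDerivWithinAt_zero {𝕜 G : Type*} [RCLike 𝕜] [NormedAddCommGroup G]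
    [NormedSpace 𝕜 G] {f : 𝕜 → G} {s : Set 𝕜} {x y : 𝕜} (hs : Convex ℝ s)
    (hf : ∀ z ∈ s, HasDerivWithinAt f 0 s z) (hx : x ∈ s) (hy : y ∈ s) : f x = f y := by
  have h := hs.norm_image_sub_le_of_norm_hasDerivWithin_le hf (C := 0) (fun _ _ => by simp) hy hx
  rw [zero_mul, norm_le_zero_iff, sub_eq_zero] at h
  exact h

theorem one_sub_mul_pos_of_lt_inv {a x : ℝ} (hx : 0 ≤ x) (hxa : x < a⁻¹) : 0 < 1 - a * x := by
  have ha : 0 < a := inv_pos.mp (hx.trans_lt hxa)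
  have : a * x < 1 := by simpa [ha.ne'] using mul_lt_mul_of_pos_left hxa ha
  linarith

theorem hasDerivAt_sq_add_sq_zero {V₁ V₂ : ℝ → ℝ} {c s : ℝ}
    (h₁ : HasDerivAt V₁ (c * V₂ s ^ 2) s) (h₂ : HasDerivAt V₂ (-(c * (V₁ s * V₂ s))) s) :
    HasDerivAt (fun t => V₁ t ^ 2 + V₂ t ^ 2) 0 s := by
  refine ((h₁.fun_pow 2).fun_add (h₂.fun_pow 2)).congr_deriv ?_
  ring

theorem hasDerivAt_mul_one_sub_mul_zero {X V₁ V₂ : ℝ → ℝ} {a s : ℝ} (hne : 1 - a * X s ≠ 0)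
    (hX : HasDerivAt X (V₁ s) s) (h₂ : HasDerivAt V₂ (-(-a / (1 - a * X s) * (V₁ s * V₂ s))) s) :
    HasDerivAt (fun t => V₂ t * (1 - a * X t)) 0 s := by
  refine (h₂.fun_mul ((hX.const_mul a).const_sub 1)).congr_deriv ?_
  field_simp
  ring

theorem knudsen_characteristics_conserved_general
    (ε : ℝ) (I : Set ℝ) (hI : Convex ℝ I)
    (X V₁ V₂ : ℝ → ℝ)
    (hXrange : ∀ s ∈ I, 0 ≤ X s ∧ X s < (ε ^ 2)⁻¹)
    (hX : ∀ s ∈ I, HasDerivAt X (V₁ s) s)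
    (hV₁ : ∀ s ∈ I, HasDerivAt V₁ ((-ε ^ 2 / (1 - ε ^ 2 * X s)) * (V₂ s) ^ 2) s)
    (hV₂ : ∀ s ∈ I, HasDerivAt V₂ (-((-ε ^ 2 / (1 - ε ^ 2 * X s)) * (V₁ s * V₂ s))) s) :
    (∀ s ∈ I, ∀ t ∈ I, V₁ s ^ 2 + V₂ s ^ 2 = V₁ t ^ 2 + V₂ t ^ 2) ∧
    (∀ s ∈ I, ∀ t ∈ I, V₂ s * (1 - ε ^ 2 * X s) = V₂ t * (1 - ε ^ 2 * X t)) ∧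
    (∀ s ∈ I, ∀ t ∈ I,
      V₂ s * Real.exp (-(-Real.log (1 - ε ^ 2 * X s))) =
        V₂ t * Real.exp (-(-Real.log (1 - ε ^ 2 * X t)))) := by
  have hpos : ∀ s ∈ I, 0 < 1 - ε ^ 2 * X s := fun s hs =>
    one_sub_mul_pos_of_lt_inv (hXrange s hs).1 (hXrange s hs).2
  have energy : ∀ s ∈ I, ∀ t ∈ I, V₁ s ^ 2 + V₂ s ^ 2 = V₁ t ^ 2 + V₂ t ^ 2 :=
    fun s hs t ht => hI.is_const_of_hasDerivWithinAt_zero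
      (fun z hz => (hasDerivAt_sq_add_sq_zero (hV₁ z hz) (hV₂ z hz)).hasDerivWithinAt) hs ht
  have momentum : ∀ s ∈ I, ∀ t ∈ I, V₂ s * (1 - ε ^ 2 * X s) = V₂ t * (1 - ε ^ 2 * X t) :=
    fun s hs t ht => hI.is_const_of_hasDerivWithinAt_zero
      (fun z hz => (hasDerivAt_mul_one_sub_mul_zero (hpos z hz).ne' (hX z hz)
        (hV₂ z hz)).hasDerivWithinAt) hs ht
  refine ⟨energy, momentum, fun s hs t ht => ?_⟩
  rw [neg_neg, neg_neg, Real.exp_log (hpos s hs), Real.exp_log (hpos t ht)]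
  exact momentum s hs t ht

/-- Conserved quantities (5-7) of the geometrically corrected Knudsen-layer
characteristics: `V₁² + V₂²` and `V₂·(1−ε²X)` (equivalently `V₂·e^{−W(X)}`,
with `W(η) = −log(1−ε²η)`) are constant along the flow. -/
theorem knudsen_characteristics_conserved
    (ε : ℝ) (hε : 0 < ε) (I : Set ℝ) (hI : Convex ℝ I)
    (X V₁ V₂ : ℝ → ℝ)
    (hXrange : ∀ s ∈ I, 0 ≤ X s ∧ X s < (ε ^ 2)⁻¹)
    (hX : ∀ s ∈ I, HasDerivAt X (V₁ s) s)
    (hV₁ : ∀ s ∈ I, HasDerivAt V₁ ((-ε ^ 2 / (1 - ε ^ 2 * X s)) * (V₂ s) ^ 2) s)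
    (hV₂ : ∀ s ∈ I, HasDerivAt V₂ (-((-ε ^ 2 / (1 - ε ^ 2 * X s)) * (V₁ s * V₂ s))) s) :
    (∀ s ∈ I, ∀ t ∈ I, V₁ s ^ 2 + V₂ s ^ 2 = V₁ t ^ 2 + V₂ t ^ 2) ∧
    (∀ s ∈ I, ∀ t ∈ I, V₂ s * (1 - ε ^ 2 * X s) = V₂ t * (1 - ε ^ 2 * X t)) ∧
    (∀ s ∈ I, ∀ t ∈ I,
      V₂ s * Real.exp (-(-Real.log (1 - ε ^ 2 * X s))) =
        V₂ t * Real.exp (-(-Real.log (1 - ε ^ 2 * X t)))) :=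
  knudsen_characteristics_conserved_general ε I hI X V₁ V₂ hXrange hX hV₁ hV₂
end

section
/- Let ε > 0, 0 ≤ η < ε⁻², and v = (v₁,v₂) ∈ ℝ² with v ≠ 0, and define η₊ := (1/ε²)·(1 − |v₂|/|v|) + (|v₂|/|v|)·η. Then: (i) for every m̃ > 0, if |v₁| ≥ m̃ then (1+|v|)²·η₊ ≥ m̃²/(2ε²); (ii) for every m ∈ (0,1], if |v₁| ≥ m·|v₂| then η₊ ≥ m²/(4ε²). -/
/-!
With `c = |v₂|/|v| ≤ 1`, the turning height satisfies `ε² η₊ ≥ 1 - c ≥ (1 - c²)/2 = v₁²/(2|v|²)`.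
Bound (i) follows after multiplying by `|v|² ≤ (1 + |v|)²`, and bound (ii) because
`|v₁| ≥ m|v₂|` with `m ≤ 1` gives `2v₁² ≥ m²|v|²`.
-/

open Real

lemma sq_fst_add_sq_snd_pos {v : ℝ × ℝ} (hv : v ≠ 0) : 0 < v.1 ^ 2 + v.2 ^ 2 := by
  obtain ⟨a, b⟩ := v
  have hab : a ≠ 0 ∨ b ≠ 0 := by
    by_contra! h
    exact hv (Prod.ext h.1 h.2)
  rcases hab with ha | hb <;> positivity

lemma one_sub_sq_div_two_le (c : ℝ) : (1 - c ^ 2) / 2 ≤ 1 - c := by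
  nlinarith [sq_nonneg (1 - c)]

lemma sq_div_two_mul_le_one_sub_abs_div_sqrt {a b : ℝ} (h : 0 < a ^ 2 + b ^ 2) :
    a ^ 2 / (2 * (a ^ 2 + b ^ 2)) ≤ 1 - |b| / √(a ^ 2 + b ^ 2) := by
  have hcos : (|b| / √(a ^ 2 + b ^ 2)) ^ 2 = b ^ 2 / (a ^ 2 + b ^ 2) := by
    rw [div_pow, sq_abs, sq_sqrt h.le]
  calc a ^ 2 / (2 * (a ^ 2 + b ^ 2)) = (1 - (|b| / √(a ^ 2 + b ^ 2)) ^ 2) / 2 := by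
        rw [hcos]; field_simp; ring
    _ ≤ 1 - |b| / √(a ^ 2 + b ^ 2) := one_sub_sq_div_two_le _

lemma sq_div_four_le_sq_div_two_mul {a b m : ℝ} (h : 0 < a ^ 2 + b ^ 2) (hm0 : 0 ≤ m)
    (hm1 : m ≤ 1) (hmab : m * |b| ≤ |a|) : m ^ 2 / 4 ≤ a ^ 2 / (2 * (a ^ 2 + b ^ 2)) := by
  have hb : m ^ 2 * b ^ 2 ≤ a ^ 2 := by
    rw [← sq_abs a, ← sq_abs b, ← mul_pow]
    exact pow_le_pow_left₀ (by positivity) hmab 2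
  have ha : m ^ 2 * a ^ 2 ≤ a ^ 2 := by
    nlinarith [pow_le_one₀ hm0 hm1 (n := 2), sq_nonneg a]
  rw [div_le_div_iff₀ (by norm_num) (by positivity)]
  nlinarith

theorem turning_height_lower_bounds_general
    (ε η : ℝ) (hη0 : 0 ≤ η)
    (v : ℝ × ℝ) (hv : v ≠ 0) :
    let vnorm : ℝ := Real.sqrt (v.1 ^ 2 + v.2 ^ 2)
    let ηp : ℝ := (1 / ε ^ 2) * (1 - |v.2| / vnorm) + (|v.2| / vnorm) * η
    (∀ mt : ℝ, 0 < mt → mt ≤ |v.1| →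
      mt ^ 2 / (2 * ε ^ 2) ≤ (1 + vnorm) ^ 2 * ηp) ∧
    (∀ m : ℝ, 0 < m → m ≤ 1 → m * |v.2| ≤ |v.1| →
      m ^ 2 / (4 * ε ^ 2) ≤ ηp) := by
  intro n ηp
  have hpos := sq_fst_add_sq_snd_pos hv
  have hn0 : 0 < n := sqrt_pos.mpr hpos
  have hn : n ^ 2 = v.1 ^ 2 + v.2 ^ 2 := sq_sqrt hpos.le
  have hηp : 1 / ε ^ 2 * (v.1 ^ 2 / (2 * n ^ 2)) ≤ ηp := by
    rw [hn]
    exact (mul_le_mul_of_nonneg_left (sq_div_two_mul_le_one_sub_abs_div_sqrt hpos)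
      (by positivity)).trans (le_add_of_nonneg_right (by positivity))
  refine ⟨fun mt hmt hmtv => ?_, fun m hm hm1 hmv => ?_⟩
  · have hηp0 : 0 ≤ ηp := le_trans (by positivity) hηp
    calc mt ^ 2 / (2 * ε ^ 2) ≤ v.1 ^ 2 / (2 * ε ^ 2) := by
          gcongr ?_ / _; exact sq_le_sq.mpr (by rwa [abs_of_pos hmt])
      _ = n ^ 2 * (1 / ε ^ 2 * (v.1 ^ 2 / (2 * n ^ 2))) := by
          have hcancel : n ^ 2 * (v.1 ^ 2 / (2 * n ^ 2)) = v.1 ^ 2 / 2 := by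
            field_simp [hn0.ne']
          rw [mul_left_comm, hcancel]; ring
      _ ≤ (1 + n) ^ 2 * ηp := by
          gcongr
          linarith
  · calc m ^ 2 / (4 * ε ^ 2) = 1 / ε ^ 2 * (m ^ 2 / 4) := by ring
      _ ≤ 1 / ε ^ 2 * (v.1 ^ 2 / (2 * n ^ 2)) := by
          rw [hn]
          exact mul_le_mul_of_nonneg_left (sq_div_four_le_sq_div_two_mul hpos hm.le hm1 hmv)
            (by positivity)
      _ ≤ ηp := hηp

/-- Lower bounds on the turning height `η₊` (equation (22.5)) used in the L^∞ estimates
of Lemmas 1.1 and 1.2. -/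
theorem turning_height_lower_bounds
    (ε η : ℝ) (hε : 0 < ε) (hη0 : 0 ≤ η) (hη : η < (ε ^ 2)⁻¹)
    (v : ℝ × ℝ) (hv : v ≠ 0) :
    let vnorm : ℝ := Real.sqrt (v.1 ^ 2 + v.2 ^ 2)
    let ηp : ℝ := (1 / ε ^ 2) * (1 - |v.2| / vnorm) + (|v.2| / vnorm) * η
    (∀ mt : ℝ, 0 < mt → mt ≤ |v.1| →
      mt ^ 2 / (2 * ε ^ 2) ≤ (1 + vnorm) ^ 2 * ηp) ∧
    (∀ m : ℝ, 0 < m → m ≤ 1 → m * |v.2| ≤ |v.1| →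
      m ^ 2 / (4 * ε ^ 2) ≤ ηp) :=
  turning_height_lower_bounds_general ε η hη0 v hv
end

section
/- Let I ⊆ ℝ be an interval and let X, Φ, V₁, V₂ : I → ℝ be differentiable with X(s) > 0 on I, satisfying X′ = V₁, Φ′ = V₂/X, V₁′ = V₂²/X, V₂′ = −V₁V₂/X on I. Then: (i) (X·V₁)′ = V₁² + V₂² on I; (ii) if there exists t₀ ∈ I with V₁(t₀) = 0, and if the constant E := V₁² + V₂² is positive, then for all s ∈ I: X(s)·V₁(s) = E·(s − t₀) and X(s)² = E·(s − t₀)² + M²/E, where M := X·V₂ is constant on I. -/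
/-!
Along the characteristics the energy `E = V₁² + V₂²` is conserved and `(X V₁)' = V₁² + V₂² = E`.
Hence `X V₁` grows linearly with slope `E` and vanishes at the turning time `t₀`, so
`(X²)' = 2 X V₁ = 2 E (s - t₀)` integrates to `X² = E (s - t₀)² + X(t₀)²`, where
`X(t₀)² E = (X(t₀) V₂(t₀))²` because `V₁(t₀) = 0`.
-/

theorem Convex.eq_of_hasDerivAt_zero {E : Type*} [NormedAddCommGroup E] [NormedSpace ℝ E]
    {I : Set ℝ} (hI : Convex ℝ I) {f : ℝ → E} (hf : ∀ s ∈ I, HasDerivAt f 0 s)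
    {a b : ℝ} (ha : a ∈ I) (hb : b ∈ I) : f a = f b := by
  have h := hI.norm_image_sub_le_of_norm_hasDerivWithin_le (C := 0)
    (fun s hs => (hf s hs).hasDerivWithinAt) (fun _ _ => by simp) hb ha
  simpa [sub_eq_zero] using h

theorem Convex.eq_add_smul_of_hasDerivAt_const {E : Type*} [NormedAddCommGroup E]
    [NormedSpace ℝ E] {I : Set ℝ} (hI : Convex ℝ I) {f : ℝ → E} {c : E}
    (hf : ∀ s ∈ I, HasDerivAt f c s) {s t : ℝ} (hs : s ∈ I) (ht : t ∈ I) :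
    f s = f t + (s - t) • c := by
  have hg : ∀ τ ∈ I, HasDerivAt (fun τ => f τ - (τ - t) • c) 0 τ := fun τ hτ =>
    ((hf τ hτ).sub (((hasDerivAt_id τ).sub_const t).smul_const c)).congr_deriv (by simp)
  have := hI.eq_of_hasDerivAt_zero hg hs ht
  simp only [sub_self, zero_smul, sub_zero] at this
  rw [← this, sub_add_cancel]

section PolarCharacteristics

variable {X V₁ V₂ : ℝ → ℝ} {s : ℝ}

theorem hasDerivAt_mul_normalVelocity (hXs : X s ≠ 0) (hX : HasDerivAt X (V₁ s) s)
    (hV₁ : HasDerivAt V₁ (V₂ s ^ 2 / X s) s) :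
    HasDerivAt (fun τ => X τ * V₁ τ) (V₁ s ^ 2 + V₂ s ^ 2) s := by
  refine (hX.mul hV₁).congr_deriv ?_
  field_simp

theorem hasDerivAt_energy_eq_zero (hXs : X s ≠ 0) (hV₁ : HasDerivAt V₁ (V₂ s ^ 2 / X s) s)
    (hV₂ : HasDerivAt V₂ (-(V₁ s * V₂ s) / X s) s) :
    HasDerivAt (fun τ => V₁ τ ^ 2 + V₂ τ ^ 2) 0 s := by
  refine ((hV₁.pow 2).add (hV₂.pow 2)).congr_deriv ?_
  field_simp
  ring

end PolarCharacteristics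

theorem polar_characteristics_radial_trajectory_general
    (I : Set ℝ) (hI : Convex ℝ I)
    (X V₁ V₂ : ℝ → ℝ)
    (hXpos : ∀ s ∈ I, 0 < X s)
    (hX : ∀ s ∈ I, HasDerivAt X (V₁ s) s)
    (hV₁ : ∀ s ∈ I, HasDerivAt V₁ ((V₂ s) ^ 2 / X s) s)
    (hV₂ : ∀ s ∈ I, HasDerivAt V₂ (-(V₁ s * V₂ s) / X s) s) :
    (∀ s ∈ I, HasDerivAt (fun τ => X τ * V₁ τ) (V₁ s ^ 2 + V₂ s ^ 2) s) ∧
    (∀ t₀ ∈ I, V₁ t₀ = 0 → 0 < V₁ t₀ ^ 2 + V₂ t₀ ^ 2 →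
      ∀ s ∈ I,
        X s * V₁ s = (V₁ t₀ ^ 2 + V₂ t₀ ^ 2) * (s - t₀) ∧
        (X s) ^ 2 = (V₁ t₀ ^ 2 + V₂ t₀ ^ 2) * (s - t₀) ^ 2 +
          (X t₀ * V₂ t₀) ^ 2 / (V₁ t₀ ^ 2 + V₂ t₀ ^ 2)) := by
  have hXne s (hs : s ∈ I) : X s ≠ 0 := (hXpos s hs).ne'
  have hXV₁ s (hs : s ∈ I) := hasDerivAt_mul_normalVelocity (hXne s hs) (hX s hs) (hV₁ s hs)
  refine ⟨hXV₁, fun t₀ ht₀ hturn hEpos => ?_⟩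
  set E := V₁ t₀ ^ 2 + V₂ t₀ ^ 2
  have henergy {s} (hs : s ∈ I) : V₁ s ^ 2 + V₂ s ^ 2 = E := hI.eq_of_hasDerivAt_zero
    (fun τ hτ => hasDerivAt_energy_eq_zero (hXne τ hτ) (hV₁ τ hτ) (hV₂ τ hτ)) hs ht₀
  have hlinear {s} (hs : s ∈ I) : X s * V₁ s = E * (s - t₀) := by
    have := hI.eq_add_smul_of_hasDerivAt_const (c := E)
      (fun τ hτ => henergy hτ ▸ hXV₁ τ hτ) hs ht₀
    simpa [hturn, mul_comm] using this
  have hsq {s} (hs : s ∈ I) : X s ^ 2 = X t₀ ^ 2 + E * (s - t₀) ^ 2 := by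
    have hdiff : ∀ τ ∈ I, HasDerivAt (fun τ => X τ ^ 2 - E * (τ - t₀) ^ 2) 0 τ := by
      intro τ hτ
      refine (((hX τ hτ).pow 2).sub
        ((((hasDerivAt_id' τ).sub_const t₀).pow 2).const_mul E)).congr_deriv ?_
      linear_combination 2 * hlinear hτ
    have := hI.eq_of_hasDerivAt_zero hdiff hs ht₀
    linear_combination this
  refine fun s hs => ⟨hlinear hs, ?_⟩
  have hturnE : E = V₂ t₀ ^ 2 := by simp [E, hturn]
  rw [hsq hs]
  field_simp
  rw [hturnE]
  ring

/-- Equations (6-1), (6-4) and (6-6): the radial trajectory of the backward free-transport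
characteristic in polar coordinates after its turning time. -/
theorem polar_characteristics_radial_trajectory
    (I : Set ℝ) (hI : Convex ℝ I)
    (X Φ V₁ V₂ : ℝ → ℝ)
    (hXpos : ∀ s ∈ I, 0 < X s)
    (hX : ∀ s ∈ I, HasDerivAt X (V₁ s) s)
    (hΦ : ∀ s ∈ I, HasDerivAt Φ (V₂ s / X s) s)
    (hV₁ : ∀ s ∈ I, HasDerivAt V₁ ((V₂ s) ^ 2 / X s) s)
    (hV₂ : ∀ s ∈ I, HasDerivAt V₂ (-(V₁ s * V₂ s) / X s) s) :
    (∀ s ∈ I, HasDerivAt (fun τ => X τ * V₁ τ) (V₁ s ^ 2 + V₂ s ^ 2) s) ∧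
    (∀ t₀ ∈ I, V₁ t₀ = 0 → 0 < V₁ t₀ ^ 2 + V₂ t₀ ^ 2 →
      ∀ s ∈ I,
        X s * V₁ s = (V₁ t₀ ^ 2 + V₂ t₀ ^ 2) * (s - t₀) ∧
        (X s) ^ 2 = (V₁ t₀ ^ 2 + V₂ t₀ ^ 2) * (s - t₀) ^ 2 +
          (X t₀ * V₂ t₀) ^ 2 / (V₁ t₀ ^ 2 + V₂ t₀ ^ 2)) :=
  polar_characteristics_radial_trajectory_general I hI X V₁ V₂ hXpos hX hV₁ hV₂
end

section
/- Let m̄ > 0 and m₂ ∈ (0,1) satisfy 4m₂ ≤ m̄²·(1−m₂)². Let r > 0, let X satisfy (1−m₂)·r ≤ X ≤ (1+m₂)·r, and let v = (v₁,v₂) ∈ ℝ² with |v₁| ≥ m̄·|v₂|. Then |v|² − v₂²·r²/X² ≥ v₁²/4. -/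
/-- Lower bound (5.47-0): near the initial radius the squared normal velocity
`|v|² − v₂²r²/X²` is bounded below by `v₁²/4`. -/
theorem normal_velocity_lower_bound
    (mb m₂ : ℝ) (hmb : 0 < mb) (hm₂0 : 0 < m₂) (hm₂1 : m₂ < 1)
    (hcond : 4 * m₂ ≤ mb ^ 2 * (1 - m₂) ^ 2)
    (r X : ℝ) (hr : 0 < r) (hX1 : (1 - m₂) * r ≤ X) (hX2 : X ≤ (1 + m₂) * r)
    (v : ℝ × ℝ) (hv1 : mb * |v.2| ≤ |v.1|) :
    v.1 ^ 2 / 4 ≤ (v.1 ^ 2 + v.2 ^ 2) - v.2 ^ 2 * r ^ 2 / X ^ 2 := by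
  have hX0 : 0 < X := lt_of_lt_of_le (by nlinarith) hX1
  have hsq : mb ^ 2 * v.2 ^ 2 ≤ v.1 ^ 2 := by
    have := mul_self_le_mul_self (by positivity) hv1
    rw [abs_mul_abs_self] at this
    nlinarith [abs_nonneg v.2, sq_abs v.1, sq_abs v.2]
  have h1 : v.2 ^ 2 * r ^ 2 / X ^ 2 ≤ v.2 ^ 2 + (3/4) * v.1 ^ 2 := by
    rw [div_le_iff₀ (by positivity)]
    have hXsq : ((1 - m₂) * r) ^ 2 ≤ X ^ 2 := pow_le_pow_left₀ (by nlinarith) hX1 2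
    nlinarith [mul_le_mul_of_nonneg_left hXsq (sq_nonneg v.2),
      mul_le_mul_of_nonneg_left hXsq (sq_nonneg v.1),
      mul_le_mul_of_nonneg_right hcond (mul_nonneg (sq_nonneg v.2) (sq_nonneg r)),
      mul_le_mul_of_nonneg_right hsq (mul_nonneg (sq_nonneg (1-m₂)) (sq_nonneg r)),
      mul_nonneg (mul_nonneg (sq_nonneg m₂) (sq_nonneg v.2)) (sq_nonneg r)]
  linarith
end

section
/- Let m₂ ∈ (0,1), b ≥ 0, r ∈ (0,1], and X ∈ (0,1] with X²·(1+b) > b·r². Set L := 1 + ((X²/r²)·(1+b) − b)^{−1/2} − 2·((1/r²)·(1+b) − b)^{−1/2}. Then: (i) if X ≥ (1+m₂)·r, then L ≥ m₂/2; (ii) if X ≤ (1−m₂)·r, then L ≥ m₂. -/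
set_option maxHeartbeats 1000000


/-- Lower bounds (6.24) and (6-70) for the bracketed factor of the Jacobian formula of
Lemma 6.2-0, when `|X/r − 1| ≥ m₂`. Here `b` plays the role of `v₂²/v₁²`. -/
theorem jacobian_bracket_lower_bounds
    (m₂ b r X : ℝ) (hm₂0 : 0 < m₂) (hm₂1 : m₂ < 1) (hb : 0 ≤ b)
    (hr0 : 0 < r) (hr1 : r ≤ 1) (hX0 : 0 < X) (hX1 : X ≤ 1)
    (hpos : b * r ^ 2 < X ^ 2 * (1 + b)) :
    ((1 + m₂) * r ≤ X →
      m₂ / 2 ≤ 1 + ((X ^ 2 / r ^ 2) * (1 + b) - b) ^ (-(1 / 2) : ℝ) -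
        2 * ((1 / r ^ 2) * (1 + b) - b) ^ (-(1 / 2) : ℝ)) ∧
    (X ≤ (1 - m₂) * r →
      m₂ ≤ 1 + ((X ^ 2 / r ^ 2) * (1 + b) - b) ^ (-(1 / 2) : ℝ) -
        2 * ((1 / r ^ 2) * (1 + b) - b) ^ (-(1 / 2) : ℝ)) := by
  have hr2 : (0:ℝ) < r ^ 2 := by positivity
  set A : ℝ := (X ^ 2 / r ^ 2) * (1 + b) - b with hAdef
  set B : ℝ := (1 / r ^ 2) * (1 + b) - b with hBdef
  have hA0 : 0 < A := by
    rw [hAdef]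
    rw [div_mul_eq_mul_div, sub_pos, lt_div_iff₀ hr2]
    nlinarith
  have h1r : (1:ℝ) ≤ 1 / r ^ 2 := by
    rw [le_div_iff₀ hr2]; nlinarith
  have hB1 : (1:ℝ) ≤ B := by
    rw [hBdef]
    nlinarith [mul_nonneg (by linarith : (0:ℝ) ≤ 1 + b) (by linarith : (0:ℝ) ≤ 1/r^2 - 1)]
  have hB0 : 0 < B := lt_of_lt_of_le one_pos hB1
  have hAB : A ≤ B := by
    rw [hAdef, hBdef]
    have h : X ^ 2 / r ^ 2 ≤ 1 / r ^ 2 := by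
      gcongr
      nlinarith
    nlinarith [mul_le_mul_of_nonneg_right h (by linarith : (0:ℝ) ≤ 1 + b)]
  have hrw : ∀ x : ℝ, 0 < x → x ^ (-(1 / 2) : ℝ) = (Real.sqrt x)⁻¹ := by
    intro x hx
    rw [Real.rpow_neg hx.le, Real.sqrt_eq_rpow]
  rw [hrw A hA0, hrw B hB0]
  have hsA : 0 < Real.sqrt A := Real.sqrt_pos.mpr hA0
  have hsB : 0 < Real.sqrt B := Real.sqrt_pos.mpr hB0
  have hsAB : (Real.sqrt B)⁻¹ ≤ (Real.sqrt A)⁻¹ :=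
    inv_anti₀ hsA (Real.sqrt_le_sqrt hAB)
  constructor
  · intro h1
    have hrm : r * (1 + m₂) ≤ 1 := by nlinarith
    have hBr : (1:ℝ) / r ^ 2 ≤ B := by
      rw [hBdef]
      nlinarith [mul_nonneg hb (by linarith : (0:ℝ) ≤ 1/r^2 - 1)]
    have hsBr : 1 / r ≤ Real.sqrt B := by
      have : Real.sqrt ((1:ℝ) / r ^ 2) ≤ Real.sqrt B := Real.sqrt_le_sqrt hBr
      rwa [show (1:ℝ)/r^2 = (1/r)^2 by ring, Real.sqrt_sq (by positivity)] at this
    have hinv : (Real.sqrt B)⁻¹ ≤ r := by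
      rw [inv_le_comm₀ hsB hr0]
      calc r⁻¹ = 1 / r := (one_div r).symm
        _ ≤ Real.sqrt B := hsBr
    nlinarith [hsAB, hinv]
  · intro h2
    have hAle : A ≤ (1 - m₂) ^ 2 := by
      rw [hAdef, sub_le_iff_le_add, div_mul_eq_mul_div, div_le_iff₀ hr2]
      have hX2 : X ^ 2 ≤ ((1 - m₂) * r) ^ 2 := pow_le_pow_left₀ hX0.le h2 2
      have hc : (0:ℝ) ≤ 1 - (1-m₂)^2 := by nlinarith
      have hd : (0:ℝ) ≤ r^2 - ((1-m₂)*r)^2 := by nlinarith [mul_nonneg hr2.le hc]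
      nlinarith [mul_le_mul_of_nonneg_right hX2 (by linarith : (0:ℝ) ≤ 1 + b),
        mul_nonneg hb hd]
    have hsAle : Real.sqrt A ≤ 1 - m₂ := by
      have := Real.sqrt_le_sqrt hAle
      rwa [Real.sqrt_sq (by linarith)] at this
    have hinvA : (1 - m₂)⁻¹ ≤ (Real.sqrt A)⁻¹ := inv_anti₀ hsA hsAle
    have hinvB : (Real.sqrt B)⁻¹ ≤ 1 := by
      rw [inv_le_one_iff₀]
      right
      calc (1:ℝ) = Real.sqrt 1 := Real.sqrt_one.symm
        _ ≤ Real.sqrt B := Real.sqrt_le_sqrt hB1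
    have h1m : (0:ℝ) < 1 - m₂ := by linarith
    have key : 1 + m₂ ≤ (1 - m₂)⁻¹ := by
      rw [inv_eq_one_div, le_div_iff₀ h1m]; nlinarith
    linarith [hinvA, hinvB, key]
end
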